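/- Let A, B ∈ M₂(ℤ) be trace-zero matrices of determinant -N (N > 0) such that for no M ∈ SL₂(ℤ) is MAM⁻¹ equal to B or -B. Then for every M ∈ SL₂(ℤ), the geodesics M·C_A and C_B (where C_A = {z in the upper half-plane : Az = conj(z)}) are distinct; in particular two distinct geodesics in the upper half-plane intersect in at most one point. -/

import Mathlib

/-
For `det A < 0`, the action of `GL(2, ℝ)` on `ℍ` sends `z` to `conj (A • z)`, so `C_A` is
the fixed-point set of `A` and `M • C_A = C_{M A M⁻¹}` is the conjugation rule for fixed points.
For `A = !![a, b; c, -a]`, `C_A` is cut out in `ℍ` by `c |z|² - 2 a Re z - b = 0`, a line in the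
`(|z|², Re z)`-plane. Two such lines through the same two points of a geodesic have proportional
coefficients, and the common determinant `-(a² + b c)` forces the factor to be `±1`. Hence
`M • C_A = C_B` would give `M A M⁻¹ = ±B`.
-/

/-- The geodesic C_A = {z ∈ H : A·z = conj z} attached to an integral matrix A. -/
def geodC (A : Matrix (Fin 2) (Fin 2) ℤ) : Set ℂ :=
  {z : ℂ | 0 < z.im ∧
    ((A 0 0 : ℂ) * z + (A 0 1 : ℂ)) / ((A 1 0 : ℂ) * z + (A 1 1 : ℂ)) = (starRingEnd ℂ) z}

/-- The Möbius action of an integral matrix on ℂ. -/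
noncomputable def moebius (M : Matrix (Fin 2) (Fin 2) ℤ) (z : ℂ) : ℂ :=
  ((M 0 0 : ℂ) * z + (M 0 1 : ℂ)) / ((M 1 0 : ℂ) * z + (M 1 1 : ℂ))

open UpperHalfPlane MulAction
open Matrix.SpecialLinearGroup (mapGL)
open scoped MatrixGroups ComplexConjugate

lemma Matrix.SpecialLinearGroup.trace_conj (M : SL(2, ℤ)) (A : Matrix (Fin 2) (Fin 2) ℤ) :
    ((M : Matrix (Fin 2) (Fin 2) ℤ) * A * (M⁻¹ : SL(2, ℤ))).trace = A.trace := by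
  rw [Matrix.trace_mul_cycle, ← Matrix.SpecialLinearGroup.coe_mul, inv_mul_cancel,
    Matrix.SpecialLinearGroup.coe_one, Matrix.one_mul]

lemma Matrix.SpecialLinearGroup.det_conj (M : SL(2, ℤ)) (A : Matrix (Fin 2) (Fin 2) ℤ) :
    ((M : Matrix (Fin 2) (Fin 2) ℤ) * A * (M⁻¹ : SL(2, ℤ))).det = A.det := by
  rw [Matrix.det_mul, Matrix.det_mul, M.det_coe, (M⁻¹).det_coe, one_mul, mul_one]

noncomputable def glOfDetNeZero (A : Matrix (Fin 2) (Fin 2) ℤ) (hA : A.det ≠ 0) : GL (Fin 2) ℝ :=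
  .mkOfDetNeZero (A.map Int.cast) (by rw [← Int.cast_det]; exact_mod_cast hA)

lemma coe_mem_geodC_iff {A : Matrix (Fin 2) (Fin 2) ℤ} (hA : A.det < 0) (τ : ℍ) :
    (τ : ℂ) ∈ geodC A ↔ glOfDetNeZero A hA.ne • τ = τ := by
  have hσ : σ (glOfDetNeZero A hA.ne) = Complex.conjCAE := by
    rw [σ, if_neg]
    simp [glOfDetNeZero, ← Int.cast_det]
    exact_mod_cast hA.le
  rw [geodC, Set.mem_ofPred_eq, UpperHalfPlane.ext_iff, coe_smul, hσ]
  simp only [num, denom, glOfDetNeZero, Matrix.GeneralLinearGroup.val_mkOfDetNeZero,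
    Matrix.map_apply, Complex.ofReal_intCast, Complex.conjCAE_apply, starRingEnd_apply]
  rw [eq_star_iff_eq_star, eq_comm]
  exact and_iff_right τ.im_pos

lemma moebius_coe (M : SL(2, ℤ)) (τ : ℍ) :
    moebius (M : Matrix (Fin 2) (Fin 2) ℤ) τ = ↑(M • τ) := by
  rw [coe_specialLinearGroup_apply]
  simp [moebius]

lemma glOfDetNeZero_conj (M : SL(2, ℤ)) {A : Matrix (Fin 2) (Fin 2) ℤ} (hA : A.det ≠ 0) :
    glOfDetNeZero ((M : Matrix (Fin 2) (Fin 2) ℤ) * A * (M⁻¹ : SL(2, ℤ)))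
        (by rwa [M.det_conj]) =
      mapGL ℝ M * glOfDetNeZero A hA * (mapGL ℝ M)⁻¹ := by
  ext : 1
  simp [glOfDetNeZero, ← map_inv, ← Int.coe_castRingHom, Matrix.map_mul]

lemma geodC_eq_image_fixedBy {A : Matrix (Fin 2) (Fin 2) ℤ} (hA : A.det < 0) :
    geodC A = (↑) '' fixedBy ℍ (glOfDetNeZero A hA.ne) := by
  ext z
  constructor
  · intro hz
    exact ⟨⟨z, hz.1⟩, (coe_mem_geodC_iff hA _).1 hz, rfl⟩
  · rintro ⟨τ, hτ, rfl⟩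
    exact (coe_mem_geodC_iff hA τ).2 hτ

lemma image_moebius_geodC (M : SL(2, ℤ)) {A : Matrix (Fin 2) (Fin 2) ℤ} (hA : A.det < 0) :
    moebius (M : Matrix (Fin 2) (Fin 2) ℤ) '' geodC A =
      geodC ((M : Matrix (Fin 2) (Fin 2) ℤ) * A * (M⁻¹ : SL(2, ℤ))) := by
  have hA' : ((M : Matrix (Fin 2) (Fin 2) ℤ) * A * (M⁻¹ : SL(2, ℤ))).det < 0 := by
    rwa [M.det_conj]
  rw [geodC_eq_image_fixedBy hA, geodC_eq_image_fixedBy hA', glOfDetNeZero_conj M hA.ne,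
    ← smul_fixedBy, Set.image_image, ← Set.image_smul, Set.image_image]
  congr 1
  funext τ
  exact moebius_coe M τ

lemma mem_geodC_iff_of_trace_eq_zero {A : Matrix (Fin 2) (Fin 2) ℤ} (htr : A.trace = 0)
    (hdet : A.det ≠ 0) (z : ℂ) :
    z ∈ geodC A ↔ 0 < z.im ∧ (A 1 0 : ℝ) * Complex.normSq z - 2 * A 0 0 * z.re - A 0 1 = 0 := by
  have h11 : A 1 1 = -A 0 0 := by rw [Matrix.trace_fin_two] at htr; omega
  refine and_congr_right fun hz => ?_
  have hden : (A 1 0 : ℂ) * z + A 1 1 ≠ 0 := by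
    simpa [denom, glOfDetNeZero] using denom_ne_zero_of_im (glOfDetNeZero A hdet) hz.ne'
  have hreal : (A 0 0 : ℂ) * z + A 0 1 - conj z * ((A 1 0 : ℂ) * z + A 1 1) =
      -(((A 1 0 : ℝ) * Complex.normSq z - 2 * A 0 0 * z.re - A 0 1 : ℝ) : ℂ) := by
    have hre := Complex.add_conj z
    have hnormSq := Complex.mul_conj z
    rw [h11]
    push_cast at hre ⊢
    linear_combination (A 0 0 : ℂ) * hre - (A 1 0 : ℂ) * hnormSq
  rw [div_eq_iff hden, ← sub_eq_zero, hreal, neg_eq_zero, Complex.ofReal_eq_zero]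

lemma exists_ne_mem_geodC {A : Matrix (Fin 2) (Fin 2) ℤ} (htr : A.trace = 0) (hdet : A.det < 0) :
    ∃ z ∈ geodC A, ∃ w ∈ geodC A, z ≠ w := by
  simp only [mem_geodC_iff_of_trace_eq_zero htr hdet.ne]
  have hN : (0 : ℝ) < A 0 0 ^ 2 + A 0 1 * A 1 0 := by
    have h11 : A 1 1 = -A 0 0 := by rw [Matrix.trace_fin_two] at htr; omega
    rw [Matrix.det_fin_two, h11] at hdet
    exact_mod_cast (by linarith : 0 < A 0 0 ^ 2 + A 0 1 * A 1 0)
  set a : ℝ := ↑(A 0 0)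
  set b : ℝ := ↑(A 0 1)
  set c : ℝ := ↑(A 1 0)
  rcases eq_or_ne c 0 with hc | hc
  · -- the vertical line `re z = -b / (2 a)`
    have ha : a ≠ 0 := by intro ha; simp [ha, hc] at hN
    refine ⟨⟨-b / (2 * a), 1⟩, ⟨one_pos, ?_⟩, ⟨-b / (2 * a), 2⟩, ⟨two_pos, ?_⟩, ?_⟩
    · field_simp
      simp [hc]
    · field_simp
      simp [hc]
    · simp [Complex.ext_iff]
  · -- the half circle of centre `a / c` and radius `r`
    set r := √((a ^ 2 + b * c) / c ^ 2)
    have hr : 0 < r := Real.sqrt_pos.2 (by positivity)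
    have hr2 : c ^ 2 * r ^ 2 = a ^ 2 + b * c := by
      rw [Real.sq_sqrt (by positivity), mul_div_cancel₀ _ (pow_ne_zero 2 hc)]
    refine ⟨⟨a / c, r⟩, ⟨hr, ?_⟩, ⟨a / c + 3 * r / 5, 4 * r / 5⟩, ⟨by positivity, ?_⟩, ?_⟩
    · simp only [Complex.normSq_mk]
      field_simp
      linear_combination hr2
    · simp only [Complex.normSq_mk]
      field_simp
      linear_combination 25 * hr2
    · simp [Complex.ext_iff, hr.ne']

lemma minors_eq_zero_of_common_zeros {a b c a' b' c' s₁ x₁ s₂ x₂ : ℝ}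
    (hne : s₁ ≠ s₂ ∨ x₁ ≠ x₂)
    (h₁ : c * s₁ - 2 * a * x₁ - b = 0) (h₂ : c * s₂ - 2 * a * x₂ - b = 0)
    (h₁' : c' * s₁ - 2 * a' * x₁ - b' = 0) (h₂' : c' * s₂ - 2 * a' * x₂ - b' = 0) :
    a * c' = a' * c ∧ b * c' = b' * c ∧ a * b' = a' * b := by
  have hs : (a * c' - a' * c) * (s₁ - s₂) = 0 := by
    linear_combination a * (h₁' - h₂') - a' * (h₁ - h₂)
  have hx : (a * c' - a' * c) * (x₁ - x₂) = 0 := by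
    linear_combination (c * (h₁' - h₂') - c' * (h₁ - h₂)) / 2
  have hac : a * c' = a' * c := by
    rw [← sub_eq_zero]
    rcases hne with hne | hne
    · exact (mul_eq_zero.1 hs).resolve_right (sub_ne_zero.2 hne)
    · exact (mul_eq_zero.1 hx).resolve_right (sub_ne_zero.2 hne)
  exact ⟨hac, by linear_combination c * h₁' - c' * h₁ - 2 * x₁ * hac,
    by linear_combination a' * h₁ - a * h₁' + s₁ * hac⟩

lemma Complex.eq_of_re_eq_of_normSq_eq {z w : ℂ} (hz : 0 < z.im) (hw : 0 < w.im)
    (hre : z.re = w.re) (hnormSq : Complex.normSq z = Complex.normSq w) : z = w := by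
  refine Complex.ext hre ((sq_eq_sq₀ hz.le hw.le).1 ?_)
  rw [Complex.normSq_apply, Complex.normSq_apply, hre] at hnormSq
  linear_combination hnormSq

lemma eq_or_eq_neg_of_minors_eq_zero {A B : Matrix (Fin 2) (Fin 2) ℤ} (hA : A.trace = 0)
    (hB : B.trace = 0) (hdet : A.det = B.det) (hdet₀ : A.det ≠ 0)
    (h₁ : A 0 0 * B 1 0 = B 0 0 * A 1 0) (h₂ : A 0 1 * B 1 0 = B 0 1 * A 1 0)
    (h₃ : A 0 0 * B 0 1 = B 0 0 * A 0 1) : A = B ∨ A = -B := by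
  have hA11 : A 1 1 = -A 0 0 := by rw [Matrix.trace_fin_two] at hA; omega
  have hB11 : B 1 1 = -B 0 0 := by rw [Matrix.trace_fin_two] at hB; omega
  set N := A 0 0 ^ 2 + A 0 1 * A 1 0
  have hNA : A.det = -N := by rw [Matrix.det_fin_two, hA11]; ring
  have hNB : B.det = -N := by rw [← hdet, hNA]
  rw [Matrix.det_fin_two, hB11] at hNB
  have hN : 2 * N ≠ 0 := by rw [hNA] at hdet₀; omega
  -- `B = (K / 2N) • A`, and comparing determinants gives `K = ± 2N`
  set K := 2 * A 0 0 * B 0 0 + A 0 1 * B 1 0 + B 0 1 * A 1 0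
  have e₀₀ : K * A 0 0 = 2 * N * B 0 0 := by linear_combination A 0 1 * h₁ + A 1 0 * h₃
  have e₀₁ : K * A 0 1 = 2 * N * B 0 1 := by linear_combination A 0 1 * h₂ - 2 * A 0 0 * h₃
  have e₁₀ : K * A 1 0 = 2 * N * B 1 0 := by linear_combination -2 * A 0 0 * h₁ - A 1 0 * h₂
  have hBA : (2 * N) • B = K • A := by
    ext i j
    fin_cases i <;> fin_cases j <;>
      simp only [Fin.zero_eta, Fin.mk_one, Fin.isValue, Matrix.smul_apply, Int.zsmul_eq_mul,
        hA11, hB11, mul_neg, neg_inj]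
    exacts [e₀₀.symm, e₀₁.symm, e₁₀.symm, e₀₀.symm]
  have hK : K ^ 2 = (2 * N) ^ 2 := by
    refine mul_left_cancel₀ (by omega : N ≠ 0) ?_
    linear_combination (K * A 0 0 + 2 * N * B 0 0) * e₀₀ + K * A 1 0 * e₀₁
      + 2 * N * B 0 1 * e₁₀ - 4 * N ^ 2 * hNB
  rcases sq_eq_sq_iff_eq_or_eq_neg.1 hK with hK | hK
  · left
    exact (smul_right_injective _ hN (hBA.trans (by rw [hK]))).symm
  · right
    refine neg_eq_iff_eq_neg.1 (smul_right_injective _ hN (hBA.trans ?_)).symm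
    simp [hK]

lemma eq_or_eq_neg_of_geodC_eq {A B : Matrix (Fin 2) (Fin 2) ℤ} (hA : A.trace = 0)
    (hB : B.trace = 0) (hdet : A.det = B.det) (hneg : A.det < 0) (h : geodC A = geodC B) :
    A = B ∨ A = -B := by
  obtain ⟨z, hzA, w, hwA, hzw⟩ := exists_ne_mem_geodC hA hneg
  have hzB := h ▸ hzA
  have hwB := h ▸ hwA
  rw [mem_geodC_iff_of_trace_eq_zero hA hneg.ne] at hzA hwA
  rw [mem_geodC_iff_of_trace_eq_zero hB (hdet ▸ hneg.ne)] at hzB hwB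
  have hne : Complex.normSq z ≠ Complex.normSq w ∨ z.re ≠ w.re := by
    by_contra! hzw'
    exact hzw (Complex.eq_of_re_eq_of_normSq_eq hzA.1 hwA.1 hzw'.2 hzw'.1)
  obtain ⟨h₁, h₂, h₃⟩ := minors_eq_zero_of_common_zeros hne hzA.2 hwA.2 hzB.2 hwB.2
  exact eq_or_eq_neg_of_minors_eq_zero hA hB hdet hneg.ne (by exact_mod_cast h₁)
    (by exact_mod_cast h₂) (by exact_mod_cast h₃)

theorem stmt_18 (N : ℤ) (hN : 0 < N) (A B : Matrix (Fin 2) (Fin 2) ℤ)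
    (hA : A.trace = 0) (hB : B.trace = 0) (hdA : A.det = -N) (hdB : B.det = -N)
    (hconj : ∀ M : Matrix.SpecialLinearGroup (Fin 2) ℤ,
      (M : Matrix (Fin 2) (Fin 2) ℤ) * A * (M⁻¹ : Matrix.SpecialLinearGroup (Fin 2) ℤ) ≠ B ∧
      (M : Matrix (Fin 2) (Fin 2) ℤ) * A * (M⁻¹ : Matrix.SpecialLinearGroup (Fin 2) ℤ) ≠ -B) :
    ∀ M : Matrix.SpecialLinearGroup (Fin 2) ℤ,
      moebius (M : Matrix (Fin 2) (Fin 2) ℤ) '' geodC A ≠ geodC B := by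
  intro M hM
  have hneg : A.det < 0 := by omega
  rw [image_moebius_geodC M hneg] at hM
  rcases eq_or_eq_neg_of_geodC_eq (by rwa [M.trace_conj]) hB
    (by rw [M.det_conj, hdA, hdB])
    (by rwa [M.det_conj]) hM with h | h
  exacts [(hconj M).1 h, (hconj M).2 h]
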